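/- arXiv:2009.04510 — 2 statements merged into one kernel-verified Lean document; each statement's English description precedes it below -/
import Mathlib

section
/- For L = 2 and any n ≥ 2, the matrix M = (1/|e ∪ f|)_{e,f ∈ E}, indexed by the 2-element subsets of {1,…,n}, satisfies M = (1/12)·I + (1/4)·J + (1/12)·(A_3 + 2I), where A_3 is the 0/1 matrix with (A_3)_{e,f} = 1 if and only if |e ∪ f| = 3, I is the identity matrix and J the all-ones matrix; consequently M is positive semidefinite. -/
open Finset

/-- The edge set of the complete graph on `n` vertices (2-element subsets). -/
abbrev Edge2 (n : ℕ) := {e : Finset (Fin n) // e.card = 2}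

/-- The matrix `M = (1/|e ∪ f|)_{e,f ∈ E}`. -/
noncomputable def Mmat (n : ℕ) : Matrix (Edge2 n) (Edge2 n) ℝ :=
  Matrix.of fun e f => ((e.1 ∪ f.1).card : ℝ)⁻¹

/-- The 0/1 matrix `A_3` with `(A_3)_{e,f} = 1` iff `|e ∪ f| = 3`. -/
def A3mat (n : ℕ) : Matrix (Edge2 n) (Edge2 n) ℝ :=
  Matrix.of fun e f => if (e.1 ∪ f.1).card = 3 then (1 : ℝ) else 0

/-!
Write `k = |e ∩ f| ∈ {0, 1, 2}`, so that `|e ∪ f| = 4 - k` and `e = f` exactly when `k = 2`.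
Both sides of the identity are then functions of `k`: the entry `1/(4 - k)` of `M` equals
`[k = 2]/12 + 1/4 + k/12`, and `A_3 + 2I` has entry `k`. The latter makes `A_3 + 2I = NᵀN` the
Gram matrix of the vertex-edge incidence matrix `N`, and `J` is the Gram matrix of the all-ones
vector, so `M` is a nonnegative combination of positive semidefinite matrices.
-/

open Matrix

theorem Finset.eq_of_card_inter_eq {α : Type*} [DecidableEq α] {s t : Finset α} {k : ℕ}
    (hs : #s = k) (ht : #t = k) (h : #(s ∩ t) = k) : s = t :=
  (eq_of_subset_of_card_le inter_subset_left (by omega)).symm.trans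
    (eq_of_subset_of_card_le inter_subset_right (by omega))

section IncidenceMatrix

variable {α ι : Type*} [DecidableEq α] (R : Type*) [NonAssocSemiring R]

def incidenceMatrix (s : ι → Finset α) : Matrix α ι R :=
  of fun a i => if a ∈ s i then 1 else 0

theorem incidenceMatrix_transpose_mul_self_apply [Fintype α] (s : ι → Finset α) (i j : ι) :
    ((incidenceMatrix R s)ᵀ * incidenceMatrix R s) i j = #(s i ∩ s j) := by
  simp only [mul_apply, transpose_apply, incidenceMatrix, of_apply, mul_ite, mul_one, mul_zero,
    ← ite_and, ← mem_inter, sum_ite_mem, univ_inter, sum_const, nsmul_one, inter_comm]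

end IncidenceMatrix

namespace Edge2

variable {n : ℕ} (e f : Edge2 n)

theorem card_inter_le_two : #(e.1 ∩ f.1) ≤ 2 :=
  (card_le_card inter_subset_left).trans e.2.le

theorem card_union_eq : #(e.1 ∪ f.1) = 4 - #(e.1 ∩ f.1) := by
  have := card_union_add_card_inter e.1 f.1
  rw [e.2, f.2] at this
  omega

theorem eq_iff_card_inter : e = f ↔ #(e.1 ∩ f.1) = 2 :=
  ⟨by rintro rfl; simpa using e.2, fun h => Subtype.ext (eq_of_card_inter_eq e.2 f.2 h)⟩

end Edge2

theorem A3mat_add_two_smul_one_apply {n : ℕ} (e f : Edge2 n) :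
    (A3mat n + (2 : ℝ) • (1 : Matrix (Edge2 n) (Edge2 n) ℝ)) e f = #(e.1 ∩ f.1) := by
  simp only [Matrix.add_apply, Matrix.smul_apply, one_apply, A3mat, of_apply, smul_eq_mul,
    Edge2.eq_iff_card_inter, Edge2.card_union_eq]
  have := Edge2.card_inter_le_two e f
  interval_cases #(e.1 ∩ f.1) <;> norm_num

theorem A3mat_add_two_smul_one_eq_gram (n : ℕ) :
    A3mat n + (2 : ℝ) • (1 : Matrix (Edge2 n) (Edge2 n) ℝ) =
      (incidenceMatrix ℝ fun e : Edge2 n => e.1)ᵀ * incidenceMatrix ℝ fun e : Edge2 n => e.1 := by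
  ext e f
  rw [A3mat_add_two_smul_one_apply, incidenceMatrix_transpose_mul_self_apply]

theorem Mmat_apply {n : ℕ} (e f : Edge2 n) :
    Mmat n e f = (if e = f then 1 else 0) / 12 + 1 / 4 + #(e.1 ∩ f.1) / 12 := by
  simp only [Mmat, of_apply, Edge2.eq_iff_card_inter, Edge2.card_union_eq]
  have := Edge2.card_inter_le_two e f
  interval_cases #(e.1 ∩ f.1) <;> norm_num

theorem posSemidef_allOnes {m : Type*} [Fintype m] :
    (of fun _ _ : m => (1 : ℝ)).PosSemidef := by
  convert posSemidef_vecMulVec_star_self (1 : m → ℝ) using 1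
  ext
  simp [vecMulVec]

theorem Mmat_eq (n : ℕ) :
    Mmat n =
        (1/12 : ℝ) • (1 : Matrix (Edge2 n) (Edge2 n) ℝ)
      + (1/4 : ℝ) • Matrix.of (fun _ _ : Edge2 n => (1 : ℝ))
      + (1/12 : ℝ) • (A3mat n + (2 : ℝ) • (1 : Matrix (Edge2 n) (Edge2 n) ℝ)) := by
  ext e f
  rw [Mmat_apply, Matrix.add_apply, Matrix.smul_apply _ (A3mat n + _), A3mat_add_two_smul_one_apply]
  simp only [Matrix.add_apply, Matrix.smul_apply, one_apply, of_apply, smul_eq_mul]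
  ring

theorem posSemidef_A3mat_add_two_smul_one (n : ℕ) :
    (A3mat n + (2 : ℝ) • (1 : Matrix (Edge2 n) (Edge2 n) ℝ)).PosSemidef := by
  rw [A3mat_add_two_smul_one_eq_gram, ← conjTranspose_eq_transpose_of_trivial]
  exact posSemidef_conjTranspose_mul_self _

theorem stmt8_general (n : ℕ) :
    Mmat n =
        (1/12 : ℝ) • (1 : Matrix (Edge2 n) (Edge2 n) ℝ)
      + (1/4 : ℝ) • Matrix.of (fun _ _ : Edge2 n => (1 : ℝ))
      + (1/12 : ℝ) • (A3mat n + (2 : ℝ) • (1 : Matrix (Edge2 n) (Edge2 n) ℝ))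
    ∧ (Mmat n).PosSemidef := by
  refine ⟨Mmat_eq n, Mmat_eq n ▸ ?_⟩
  exact ((PosSemidef.one.smul (by norm_num)).add (posSemidef_allOnes.smul (by norm_num))).add
    ((posSemidef_A3mat_add_two_smul_one n).smul (by norm_num))

/-- For `L = 2`: `M = (1/12)·I + (1/4)·J + (1/12)·(A_3 + 2I)`; consequently `M ⪰ 0`. -/
theorem stmt8 (n : ℕ) (hn : 2 ≤ n) :
    Mmat n =
        (1/12 : ℝ) • (1 : Matrix (Edge2 n) (Edge2 n) ℝ)
      + (1/4 : ℝ) • Matrix.of (fun _ _ : Edge2 n => (1 : ℝ))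
      + (1/12 : ℝ) • (A3mat n + (2 : ℝ) • (1 : Matrix (Edge2 n) (Edge2 n) ℝ))
    ∧ (Mmat n).PosSemidef :=
  stmt8_general n
end

section
/- For all integers n ≥ 1, L ≥ 2 and 1 ≤ p ≤ n, the matrix M_p is positive semidefinite, where, for a set U of cardinality n − p and F = {e ⊆ U : |e| ≤ L}, M_p is the F×F matrix with entries (M_p)_{e,f} = 1/(p + |e ∪ f|). -/
open Finset

/-- For a ground set `U` of cardinality `n − p`, the index set `F = {e ⊆ U : |e| ≤ L}`,
realized as subsets of `Fin (n − p)` of cardinality at most `L`. -/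
abbrev SmallSub (np L : ℕ) := {e : Finset (Fin np) // e.card ≤ L}

/-- The matrix `M_p = (1/(p + |e ∪ f|))_{e,f ∈ F}`. -/
noncomputable def Mpmat (np L p : ℕ) : Matrix (SmallSub np L) (SmallSub np L) ℝ :=
  Matrix.of fun e f => (((p + (e.1 ∪ f.1).card : ℕ)) : ℝ)⁻¹

/-!
Since `1/(p + k) = ∫₀¹ t^(p-1) t^k dt`, the matrix is an integral over `t ∈ [0,1]` of the
matrices `t^(p-1) (t^|e ∪ f|)_{e,f}`, so it suffices that each `(t^|e ∪ f|)` is positive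
semidefinite. For `0 ≤ t ≤ 1` this is a nonnegative combination of rank-one matrices: expanding
`t^|e ∩ f| = (t(1-t) + t²)^|e ∩ f|` gives
`t^|e ∪ f| = ∑_{S ⊆ e ∩ f} (t(1-t))^|S| · t^|e ∖ S| · t^|f ∖ S|`,
i.e. the sum over `S` of `(t(1-t))^|S| v_S v_Sᵀ` with `v_S(e) = [S ⊆ e] t^|e ∖ S|`.
-/

open MeasureTheory
open scoped Matrix

theorem pow_card_union_eq_sum {α R : Type*} [DecidableEq α] [CommRing R] (e f : Finset α)
    (t : R) : t ^ #(e ∪ f) =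
      ∑ S ∈ (e ∩ f).powerset, (t * (1 - t)) ^ #S * (t ^ (#e - #S) * t ^ (#f - #S)) := by
  have hunion := card_union_add_card_inter e f
  set A := e ∩ f
  have hAe : #A ≤ #e := card_le_card inter_subset_left
  have hAf : #A ≤ #f := card_le_card inter_subset_right
  have hterm : ∀ S ∈ A.powerset, (t * (1 - t)) ^ #S * (t ^ (#e - #S) * t ^ (#f - #S))
      = t ^ (#e - #A) * t ^ (#f - #A) * ((t * (1 - t)) ^ #S * (t * t) ^ (#A - #S)) := by
    intro S hS
    have hSA : #S ≤ #A := card_le_card (mem_powerset.1 hS)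
    rw [show #e - #S = (#e - #A) + (#A - #S) by omega,
      show #f - #S = (#f - #A) + (#A - #S) by omega]
    ring
  rw [sum_congr rfl hterm, ← mul_sum, sum_pow_mul_eq_add_pow, ← pow_add,
    show t * (1 - t) + t * t = t by ring, ← pow_add]
  congr 1
  omega

theorem inv_natCast_add_eq_integral {p : ℕ} (hp : 0 < p) (k : ℕ) :
    ((p + k : ℕ) : ℝ)⁻¹ = ∫ t in (0 : ℝ)..1, t ^ (p - 1) * t ^ k := by
  simp_rw [← pow_add]
  rw [integral_pow, one_pow, zero_pow (by omega), sub_zero, one_div]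
  congr 1
  exact_mod_cast (by omega : p + k = p - 1 + k + 1)

namespace Matrix

theorem PosSemidef.of_intervalIntegral {ι : Type*} [Fintype ι] {A : ℝ → Matrix ι ι ℝ}
    {a b : ℝ} (hab : a ≤ b) (hA : ∀ t ∈ Set.Icc a b, (A t).PosSemidef)
    (hint : ∀ i j, IntervalIntegrable (fun t => A t i j) volume a b) :
    (of fun i j => ∫ t in a..b, A t i j).PosSemidef := by
  refine .of_dotProduct_mulVec_nonneg ?_ fun x => ?_
  · ext i j
    refine intervalIntegral.integral_congr fun t ht => ?_
    rw [Set.uIcc_of_le hab] at ht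
    exact (hA t ht).isHermitian.apply i j
  · have hquad : star x ⬝ᵥ (of (fun i j => ∫ t in a..b, A t i j) *ᵥ x)
        = ∫ t in a..b, star x ⬝ᵥ (A t *ᵥ x) := by
      simp only [dotProduct, mulVec, of_apply, star_trivial, mul_sum]
      symm
      rw [intervalIntegral.integral_finsetSum (f := fun i t => ∑ j, x i * (A t i j * x j))
        fun i _ => by
          simpa only [← sum_fn] using
            IntervalIntegrable.sum univ fun j _ => ((hint i j).mul_const (x j)).const_mul (x i)]
      refine sum_congr rfl fun i _ => ?_
      rw [intervalIntegral.integral_finsetSum fun j _ => ((hint i j).mul_const _).const_mul _]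
      refine sum_congr rfl fun j _ => ?_
      rw [intervalIntegral.integral_const_mul, intervalIntegral.integral_mul_const]
    rw [hquad]
    exact intervalIntegral.integral_nonneg hab fun t ht => (hA t ht).dotProduct_mulVec_nonneg x

theorem posSemidef_pow_card_union {ι α : Type*} [Fintype ι] [Fintype α] [DecidableEq α]
    (s : ι → Finset α) {t : ℝ} (ht₀ : 0 ≤ t) (ht₁ : t ≤ 1) :
    (of fun i j => t ^ #(s i ∪ s j)).PosSemidef := by
  set v : Finset α → ι → ℝ := fun S i => if S ⊆ s i then t ^ (#(s i) - #S) else 0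
  have hsum : of (fun i j => t ^ #(s i ∪ s j))
      = ∑ S : Finset α, (t * (1 - t)) ^ #S • vecMulVec (v S) (v S) := by
    ext i j
    simp only [of_apply, sum_apply, smul_apply, vecMulVec_apply, smul_eq_mul, v,
      ite_zero_mul_ite_zero]
    simp only [mul_ite, mul_zero]
    rw [pow_card_union_eq_sum, ← sum_filter]
    refine sum_congr ?_ fun _ _ => rfl
    ext S
    simp only [mem_filter, mem_univ, true_and, mem_powerset, subset_inter_iff]
  rw [hsum]
  refine posSemidef_sum _ fun S _ => ?_
  simpa using (posSemidef_vecMulVec_self_star (v S)).smul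
    (pow_nonneg (mul_nonneg ht₀ (sub_nonneg.2 ht₁)) #S)

theorem posSemidef_inv_natCast_add_card_union {ι α : Type*} [Fintype ι] [Fintype α]
    [DecidableEq α] (s : ι → Finset α) {p : ℕ} (hp : 0 < p) :
    (of fun i j => ((p + #(s i ∪ s j) : ℕ) : ℝ)⁻¹).PosSemidef := by
  simp_rw [inv_natCast_add_eq_integral hp]
  refine PosSemidef.of_intervalIntegral
    (A := fun t => t ^ (p - 1) • of fun i j => t ^ #(s i ∪ s j)) zero_le_one
    (fun t ht => (posSemidef_pow_card_union s ht.1 ht.2).smul (pow_nonneg ht.1 _))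
    fun i j => (continuous_pow _ |>.mul (continuous_pow _)).intervalIntegrable 0 1

end Matrix

theorem stmt12_general (n L p : ℕ) (hp1 : 1 ≤ p) :
    (Mpmat (n - p) L p).PosSemidef :=
  Matrix.posSemidef_inv_natCast_add_card_union Subtype.val hp1

/-- For all `n ≥ 1`, `L ≥ 2` and `1 ≤ p ≤ n`, the matrix `M_p` is positive semidefinite. -/
theorem stmt12 (n L p : ℕ) (hn : 1 ≤ n) (hL : 2 ≤ L) (hp1 : 1 ≤ p) (hpn : p ≤ n) :
    (Mpmat (n - p) L p).PosSemidef :=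
  stmt12_general n L p hp1
end
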